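/- arXiv:1409.8094 — 2 statements merged into one kernel-verified Lean document; each statement's English description precedes it below -/
import Mathlib

section
/- Let X be a one-dimensional diffusion on (0,∞) with absorption time T₀ at 0 and eigenvalue λ₁ > 0. Suppose there exists x₀ > 0 with B₁ := sup_{x ≥ x₀} E_x[exp(λ₁ T_{x₀})] < ∞ and B₂ := sup_{u ≥ 0} e^{λ₁ u} P_{x₀}(T₀ > u) < ∞. Then for all x > x₀ and all t ≥ 0, P_x(T₀ > t) ≤ e^{-λ₁ t} B₁ (B₂ + 1). -/
/-!
Markov's inequality bounds the tail `P_x(T_{x₀} > t)` by `e^{-λ₁ t} E_x[e^{λ₁ T_{x₀}}]`, and the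
bound `P_{x₀}(T₀ > u) ≤ B₂ e^{-λ₁ u}` turns the convolution term of the strong Markov decomposition
into at most `B₂ e^{-λ₁ t} E_x[e^{λ₁ T_{x₀}}]`, since `e^{-λ₁ (t - s)} = e^{-λ₁ t} e^{λ₁ s}`.
Both expectations are at most `B₁`.
-/

open MeasureTheory Set

theorem mul_measureReal_Ioi_le_integral_of_monotone {μ : Measure ℝ} {g : ℝ → ℝ}
    (hg_mono : Monotone g) (hg_nonneg : 0 ≤ g) (hg_int : Integrable g μ) (t : ℝ) :
    g t * μ.real (Ioi t) ≤ ∫ s, g s ∂μ := by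
  rcases (show 0 ≤ g t from hg_nonneg t).eq_or_lt with hgt | hgt
  · rw [← hgt, zero_mul]
    exact integral_nonneg hg_nonneg
  calc g t * μ.real (Ioi t) ≤ g t * μ.real {s | g t ≤ g s} :=
        mul_le_mul_of_nonneg_left
          (measureReal_mono (fun s hs => hg_mono hs.le) (hg_int.measure_ge_lt_top hgt).ne)
          hgt.le
    _ ≤ ∫ s, g s ∂μ := mul_meas_ge_le_integral_of_nonneg (ae_of_all _ hg_nonneg) hg_int _

theorem setIntegral_Icc_comp_sub_le {μ : Measure ℝ} {f : ℝ → ℝ} {c B : ℝ} (hB : 0 ≤ B)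
    (hexp : Integrable (fun s => Real.exp (c * s)) μ)
    (hf : ∀ u ≥ (0:ℝ), f u ≤ B * Real.exp (-(c * u))) (t : ℝ) :
    ∫ s in Icc 0 t, f (t - s) ∂μ ≤ B * Real.exp (-(c * t)) * ∫ s, Real.exp (c * s) ∂μ := by
  by_cases hfi : IntegrableOn (fun s => f (t - s)) (Icc 0 t) μ
  swap
  · rw [integral_undef hfi]
    positivity
  have hpt : ∀ s ∈ Icc 0 t, f (t - s) ≤ B * Real.exp (-(c * t)) * Real.exp (c * s) := by
    intro s hs
    calc f (t - s) ≤ B * Real.exp (-(c * (t - s))) := hf _ (sub_nonneg.2 hs.2)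
      _ = B * Real.exp (-(c * t)) * Real.exp (c * s) := by
        rw [mul_assoc, ← Real.exp_add]; ring_nf
  calc ∫ s in Icc 0 t, f (t - s) ∂μ
      ≤ ∫ s in Icc 0 t, B * Real.exp (-(c * t)) * Real.exp (c * s) ∂μ :=
        setIntegral_mono_on hfi (hexp.const_mul _).integrableOn measurableSet_Icc hpt
    _ = B * Real.exp (-(c * t)) * ∫ s in Icc 0 t, Real.exp (c * s) ∂μ := integral_const_mul _ _
    _ ≤ B * Real.exp (-(c * t)) * ∫ s, Real.exp (c * s) ∂μ := by
        gcongr ?_ * ?_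
        exact setIntegral_le_integral hexp (ae_of_all _ fun s => (Real.exp_pos _).le)

theorem quasi_ergodic_survival_bound_general
    (S : ℝ → ℝ → ℝ)              -- S x t = P_x(T₀ > t)
    (ν : ℝ → Measure ℝ)          -- law of T_{x₀} under P_x
    (lam1 x0 B1 B2 : ℝ)
    (hlam : 0 < lam1)
    (hSnonneg : ∀ x t, 0 ≤ S x t)
    (hint : ∀ x ≥ x0, Integrable (fun s => Real.exp (lam1 * s)) (ν x))
    -- B₁ := sup_{x ≥ x₀} E_x[exp(λ₁ T_{x₀})] < ∞ :
    (hB1 : ∀ x ≥ x0, ∫ s, Real.exp (lam1 * s) ∂(ν x) ≤ B1)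
    -- B₂ := sup_{u ≥ 0} e^{λ₁ u} P_{x₀}(T₀ > u) < ∞ :
    (hB2 : ∀ u ≥ (0:ℝ), Real.exp (lam1 * u) * S x0 u ≤ B2)
    -- strong Markov decomposition of the survival probability:
    (hdecomp : ∀ x > x0, ∀ t ≥ (0:ℝ),
      S x t = ∫ s in Set.Icc (0:ℝ) t, S x0 (t - s) ∂(ν x) + ((ν x) (Set.Ioi t)).toReal) :
    ∀ x > x0, ∀ t ≥ (0:ℝ), S x t ≤ Real.exp (-(lam1 * t)) * B1 * (B2 + 1) := by
  intro x hx t ht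
  set E := ∫ s, Real.exp (lam1 * s) ∂(ν x)
  have hexp := hint x hx.le
  have hB2_nonneg : 0 ≤ B2 := (mul_nonneg (Real.exp_pos _).le (hSnonneg x0 0)).trans (hB2 0 le_rfl)
  have hS0 : ∀ u ≥ (0:ℝ), S x0 u ≤ B2 * Real.exp (-(lam1 * u)) := fun u hu => by
    rw [Real.exp_neg, ← div_eq_mul_inv, le_div_iff₀' (Real.exp_pos _)]
    exact hB2 u hu
  have htail : ((ν x) (Set.Ioi t)).toReal ≤ Real.exp (-(lam1 * t)) * E := by
    have hmarkov := mul_measureReal_Ioi_le_integral_of_monotone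
      (fun a b hab => Real.exp_le_exp.2 (mul_le_mul_of_nonneg_left hab hlam.le))
      (fun s => (Real.exp_pos _).le) hexp t
    rw [Real.exp_neg, ← div_eq_inv_mul, le_div_iff₀' (Real.exp_pos _)]
    exact hmarkov
  calc S x t ≤ B2 * Real.exp (-(lam1 * t)) * E + Real.exp (-(lam1 * t)) * E := by
        rw [hdecomp x hx t ht]
        exact add_le_add (setIntegral_Icc_comp_sub_le hB2_nonneg hexp hS0 t) htail
    _ = Real.exp (-(lam1 * t)) * E * (B2 + 1) := by ring
    _ ≤ Real.exp (-(lam1 * t)) * B1 * (B2 + 1) := by gcongr; exact hB1 x hx.le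

/-- `S x t` models the survival probability `P_x(T₀ > t)` of the diffusion started at `x`,
and `ν x` models the law of the hitting time `T_{x₀}` under `P_x`.  The strong Markov
decomposition `P_x(T₀>t) = ∫₀ᵗ P_{x₀}(T₀>u) P_x(T_{x₀} ∈ d(t-u)) + P_x(T_{x₀}>t)`
is encoded as hypothesis `hdecomp` (with `s = t - u`). -/
theorem quasi_ergodic_survival_bound
    (S : ℝ → ℝ → ℝ)              -- S x t = P_x(T₀ > t)
    (ν : ℝ → Measure ℝ)          -- law of T_{x₀} under P_x
    (lam1 x0 B1 B2 : ℝ)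
    (hlam : 0 < lam1) (hx0 : 0 < x0)
    (hSnonneg : ∀ x t, 0 ≤ S x t)
    (hSle : ∀ x t, S x t ≤ 1)
    (hprob : ∀ x, IsProbabilityMeasure (ν x))
    (hint : ∀ x ≥ x0, Integrable (fun s => Real.exp (lam1 * s)) (ν x))
    -- B₁ := sup_{x ≥ x₀} E_x[exp(λ₁ T_{x₀})] < ∞ :
    (hB1 : ∀ x ≥ x0, ∫ s, Real.exp (lam1 * s) ∂(ν x) ≤ B1)
    -- B₂ := sup_{u ≥ 0} e^{λ₁ u} P_{x₀}(T₀ > u) < ∞ :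
    (hB2 : ∀ u ≥ (0:ℝ), Real.exp (lam1 * u) * S x0 u ≤ B2)
    -- strong Markov decomposition of the survival probability:
    (hdecomp : ∀ x > x0, ∀ t ≥ (0:ℝ),
      S x t = ∫ s in Set.Icc (0:ℝ) t, S x0 (t - s) ∂(ν x) + ((ν x) (Set.Ioi t)).toReal) :
    ∀ x > x0, ∀ t ≥ (0:ℝ), S x t ≤ Real.exp (-(lam1 * t)) * B1 * (B2 + 1) :=
  quasi_ergodic_survival_bound_general S ν lam1 x0 B1 B2 hlam hSnonneg hint hB1 hB2 hdecomp
end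

section
/- For the transformed logistic Feller diffusion, i.e. the diffusion dX_t = dB_t − α(X_t)dt with α(x) = 1/(2x) − rx/2 + cγx³/8 (r, c, γ > 0), hypothesis (H) holds: (H1) P_x(τ = T₀ < T_∞) = 1 for all x > 0; (H2) μ(0,ε) = ∞ for all ε > 0; (H3) ∫₁^∞ e^{Q(y)} (∫_y^∞ e^{-Q(z)} dz) dy < ∞, where Q(y) = ∫₁^y 2α and μ(dy) = e^{-Q(y)}dy. -/
open MeasureTheory Filter

/-! Setting of the paper: `X` solves `dX_t = dB_t − α(X_t)dt` on `(0,∞)`, killed at `0`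
at time `T₀`; `Q(y) = ∫₁^y 2α`, `μ(dy) = e^{−Q(y)}dy` on `(0,∞)`, `Λ` the scale function,
`κ` the Feller test integral.  Hypothesis (H) says: 0 is an exit boundary and +∞ an
entrance boundary, i.e. (H1) `Λ(∞)=∞` and `κ(0⁺)<∞` (equivalent to certain absorption),
(H2) `μ(0,ε)=∞`, (H3) `∫₁^∞ e^{Q(y)} (∫_y^∞ e^{−Q(z)}dz) dy < ∞`. -/

noncomputable def Qfun (α : ℝ → ℝ) (y : ℝ) : ℝ := ∫ u in (1:ℝ)..y, 2 * α u

noncomputable def scaleFun (α : ℝ → ℝ) (x : ℝ) : ℝ := ∫ y in (1:ℝ)..x, Real.exp (Qfun α y)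

noncomputable def kappaFun (α : ℝ → ℝ) (x : ℝ) : ℝ :=
  ∫ y in (1:ℝ)..x, Real.exp (Qfun α y) * ∫ z in (1:ℝ)..y, Real.exp (-Qfun α z)

/-- The speed measure `μ(dy) = e^{-Q(y)} dy` on `(0,∞)`. -/
noncomputable def speedMeasure (α : ℝ → ℝ) : Measure ℝ :=
  (volume.restrict (Set.Ioi (0:ℝ))).withDensity
    (fun y => ENNReal.ofReal (Real.exp (-Qfun α y)))

/-- Hypothesis (H) of the paper. -/
def HypH (α : ℝ → ℝ) : Prop :=
  -- (H1): absorption at 0 is certain: Λ(∞) = ∞ and κ(0⁺) < ∞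
  (Tendsto (scaleFun α) atTop atTop ∧ BddAbove (kappaFun α '' Set.Ioo (0:ℝ) 1)) ∧
  -- (H2): μ(0,ε) = ∞ for all ε > 0
  (∀ ε > (0:ℝ), speedMeasure α (Set.Ioo 0 ε) = ⊤) ∧
  -- (H3): S = ∫₁^∞ e^{Q(y)} (∫_y^∞ e^{-Q(z)} dz) dy < ∞
  ((∀ y ≥ (1:ℝ), IntegrableOn (fun z => Real.exp (-Qfun α z)) (Set.Ioi y)) ∧
    IntegrableOn (fun y => Real.exp (Qfun α y) * ∫ z in Set.Ioi y, Real.exp (-Qfun α z))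
      (Set.Ioi (1:ℝ)))

/-! On `(0, ∞)` the drift integrates in closed form, `Q(y) = log y − r(y² − 1)/2 + cγ(y⁴ − 1)/16`.
Near `0` the logarithm dominates, so `e^{Q(y)} ≍ y` and `e^{−Q(y)} ≍ 1/y`: hence `μ(0, ε) = ∞`, and
the integrand of `κ` is `O(y |log y|)`, which is bounded. On `[1, ∞)` the quartic term dominates:
`e^{Q}` is bounded below, so `Λ(∞) = ∞`, and `e^{−Q(z)} = O(z⁻²)`. Beyond a threshold
`Q' = 2α ≥ y²`, so the tail `∫_y^∞ e^{−Q}` is at most `e^{−Q(y)}/y²` and the integrand of (H3) is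
`O(y⁻²)`. -/

open Set Real

theorem tendsto_intervalIntegral_atTop_of_const_le {f : ℝ → ℝ} {a m : ℝ} (hm : 0 < m)
    (hf : ContinuousOn f (Ici a)) (hfm : ∀ y ≥ a, m ≤ f y) :
    Tendsto (fun x => ∫ y in a..x, f y) atTop atTop := by
  have hlin : Tendsto (fun x => m * (x - a)) atTop atTop :=
    (tendsto_atTop_add_const_right atTop (-a) tendsto_id).const_mul_atTop hm
  refine tendsto_atTop_mono' atTop (eventually_atTop.mpr ⟨a, fun x hx => ?_⟩) hlin
  have hfx : IntervalIntegrable f volume a x :=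
    (hf.mono (by rw [uIcc_of_le hx]; exact Icc_subset_Ici_self)).intervalIntegrable
  calc m * (x - a) = ∫ _ in a..x, m := by simp [mul_comm]
    _ ≤ ∫ y in a..x, f y :=
      intervalIntegral.integral_mono_on hx intervalIntegrable_const hfx fun y hy => hfm y hy.1

theorem setIntegral_Ioi_exp_neg_le {q : ℝ → ℝ} {y b : ℝ} (hb : 0 < b)
    (hint : IntegrableOn (fun z => exp (-q z)) (Ioi y))
    (hq : ∀ z > y, q y + b * (z - y) ≤ q z) :
    ∫ z in Ioi y, exp (-q z) ≤ exp (-q y) / b := by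
  have hexp : IntegrableOn (fun z => exp (-q y + b * y) * exp (-b * z)) (Ioi y) :=
    (exp_neg_integrableOn_Ioi y hb).const_mul _
  calc ∫ z in Ioi y, exp (-q z) ≤ ∫ z in Ioi y, exp (-q y + b * y) * exp (-b * z) :=
        setIntegral_mono_on hint hexp measurableSet_Ioi fun z hz => by
          rw [← exp_add]; exact exp_le_exp.mpr (by linarith [hq z hz])
    _ = exp (-q y) / b := by
        rw [integral_const_mul, integral_exp_mul_Ioi (by linarith), div_neg, neg_div,
          neg_neg, mul_div_assoc', ← exp_add]
        ring_nf

theorem lintegral_Ioo_zero_eq_top_of_inv_le {f : ℝ → ℝ} {k δ : ℝ} (hk : 0 < k) (hδ : 0 < δ)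
    (hf : ∀ y ∈ Ioo 0 δ, k * y⁻¹ ≤ f y) :
    ∫⁻ y in Ioo 0 δ, ENNReal.ofReal (f y) = ⊤ := by
  have hinv : ∫⁻ y in Ioo 0 δ, ENNReal.ofReal y⁻¹ = ⊤ := by
    by_contra hfin
    have hnn : 0 ≤ᵐ[volume.restrict (Ioo 0 δ)] fun y : ℝ => y⁻¹ :=
      (ae_restrict_mem measurableSet_Ioo).mono fun y hy => inv_nonneg.mpr hy.1.le
    have hint : IntegrableOn (fun y : ℝ => y⁻¹) (Ioo 0 δ) :=
      ⟨measurable_inv.aestronglyMeasurable,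
        (hasFiniteIntegral_iff_ofReal hnn).mpr (lt_top_iff_ne_top.mpr hfin)⟩
    have := (intervalIntegrable_iff_integrableOn_Ioo_of_le hδ.le).mpr hint
    simp [hδ.ne] at this
  refine top_unique ?_
  calc ⊤ = ENNReal.ofReal k * ∫⁻ y in Ioo 0 δ, ENNReal.ofReal y⁻¹ := by
        rw [hinv, ENNReal.mul_top (by simpa using hk)]
    _ = ∫⁻ y in Ioo 0 δ, ENNReal.ofReal (k * y⁻¹) := by
        rw [← lintegral_const_mul _ measurable_inv.ennreal_ofReal]
        refine setLIntegral_congr_fun measurableSet_Ioo fun y _ => ?_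
        rw [ENNReal.ofReal_mul hk.le]
    _ ≤ ∫⁻ y in Ioo 0 δ, ENNReal.ofReal (f y) :=
        setLIntegral_mono' measurableSet_Ioo fun y hy => ENNReal.ofReal_le_ofReal (hf y hy)

theorem antitoneOn_setIntegral_Ioi {f : ℝ → ℝ} {a : ℝ} (hf : IntegrableOn f (Ioi a))
    (hf0 : ∀ z, 0 ≤ f z) : AntitoneOn (fun y => ∫ z in Ioi y, f z) (Ici a) :=
  fun _ hy₁ _ _ hy₁₂ => setIntegral_mono_set (hf.mono_set (Ioi_subset_Ioi hy₁))
    (ae_of_all _ hf0) (LE.le.eventuallyLE (Ioi_subset_Ioi hy₁₂))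

namespace LogisticFeller

noncomputable def drift (r c γ x : ℝ) : ℝ := 1 / (2 * x) - r * x / 2 + c * γ * x ^ 3 / 8

noncomputable def potential (r c γ y : ℝ) : ℝ :=
  log y - r * (y ^ 2 - 1) / 2 + c * γ * (y ^ 4 - 1) / 16

noncomputable def tailThreshold (r c γ : ℝ) : ℝ := max 1 (4 * (1 + r) / (c * γ))

variable {r c γ : ℝ}

theorem hasDerivAt_potential {y : ℝ} (hy : 0 < y) :
    HasDerivAt (potential r c γ) (2 * drift r c γ y) y := by
  have h := ((hasDerivAt_log hy.ne').sub
    ((((hasDerivAt_pow 2 y).sub_const 1).const_mul r).div_const 2)).add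
    ((((hasDerivAt_pow 4 y).sub_const 1).const_mul (c * γ)).div_const 16)
  refine h.congr_deriv ?_
  unfold drift
  field_simp
  ring

theorem continuousOn_drift : ContinuousOn (drift r c γ) (Ioi 0) := fun x hx => by
  have hx : x ≠ 0 := (mem_Ioi.mp hx).ne'
  unfold drift
  fun_prop (disch := positivity)

theorem intervalIntegrable_two_mul_drift {a b : ℝ} (ha : 0 < a) (hb : 0 < b) :
    IntervalIntegrable (fun t => 2 * drift r c γ t) volume a b :=
  ((continuousOn_drift.mono (ordConnected_Ioi.uIcc_subset ha hb)).intervalIntegrable).const_mul 2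

theorem Qfun_drift {y : ℝ} (hy : 0 < y) : Qfun (drift r c γ) y = potential r c γ y := by
  rw [Qfun, intervalIntegral.integral_eq_sub_of_hasDerivAt
    (fun t ht => hasDerivAt_potential (ordConnected_Ioi.uIcc_subset one_pos hy ht))
    (intervalIntegrable_two_mul_drift one_pos hy)]
  simp [potential]

theorem continuousOn_Qfun_drift : ContinuousOn (Qfun (drift r c γ)) (Ioi 0) := fun _ hy =>
  (hasDerivAt_potential hy).continuousAt.continuousWithinAt.congr (fun _ hz => Qfun_drift hz)
    (Qfun_drift hy)

theorem log_sub_le_Qfun_drift (hr : 0 ≤ r) (hcγ : 0 ≤ c * γ) {y : ℝ} (hy₀ : 0 < y)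
    (hy₁ : y ≤ 1) :
    log y - c * γ / 16 ≤ Qfun (drift r c γ) y := by
  have : y ^ 2 ≤ 1 := pow_le_one₀ hy₀.le hy₁
  have : 0 ≤ y ^ 4 := by positivity
  rw [Qfun_drift hy₀, potential]
  nlinarith

theorem Qfun_drift_le_log_add (hr : 0 ≤ r) (hcγ : 0 ≤ c * γ) {y : ℝ} (hy₀ : 0 < y)
    (hy₁ : y ≤ 1) :
    Qfun (drift r c γ) y ≤ log y + r / 2 := by
  have : 0 ≤ y ^ 2 := by positivity
  have : y ^ 4 ≤ 1 := pow_le_one₀ hy₀.le hy₁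
  rw [Qfun_drift hy₀, potential]
  nlinarith

theorem two_mul_log_sub_le_Qfun_drift (hcγ : 0 < c * γ) {z : ℝ} (hz : 1 ≤ z) :
    2 * log z - (2 + r) ^ 2 / (c * γ) ≤ Qfun (drift r c γ) z := by
  have hlog : log z ≤ z ^ 2 - 1 := by
    nlinarith [log_le_sub_one_of_pos (zero_lt_one.trans_le hz)]
  have hsq : c * γ * (z ^ 2 - 1) ^ 2 / 16 - (2 + r) * (z ^ 2 - 1) / 2 + (2 + r) ^ 2 / (c * γ)
      = (c * γ * (z ^ 2 - 1) / 4 - (2 + r)) ^ 2 / (c * γ) := by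
    generalize c * γ = k at hcγ ⊢
    field_simp
    ring
  have : 0 ≤ (c * γ * (z ^ 2 - 1) / 4 - (2 + r)) ^ 2 / (c * γ) := by positivity
  have : 0 ≤ z ^ 2 - 1 := by nlinarith
  rw [Qfun_drift (zero_lt_one.trans_le hz), potential]
  nlinarith

theorem exp_neg_Qfun_drift_le (hcγ : 0 < c * γ) {z : ℝ} (hz : 1 ≤ z) :
    exp (-Qfun (drift r c γ) z) ≤ exp ((2 + r) ^ 2 / (c * γ)) * z ^ (-2 : ℝ) := by
  rw [rpow_def_of_pos (zero_lt_one.trans_le hz), ← exp_add]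
  exact exp_le_exp.mpr (by linarith [two_mul_log_sub_le_Qfun_drift (r := r) hcγ hz])

theorem integrableOn_exp_neg_Qfun_drift (hcγ : 0 < c * γ) {y : ℝ} (hy : 1 ≤ y) :
    IntegrableOn (fun z => exp (-Qfun (drift r c γ) z)) (Ioi y) := by
  have hy₀ : 0 < y := zero_lt_one.trans_le hy
  refine Integrable.mono' ((integrableOn_Ioi_rpow_of_lt (a := -2) (by norm_num) hy₀).const_mul
    (exp ((2 + r) ^ 2 / (c * γ))))
    ((continuousOn_Qfun_drift.mono (Ioi_subset_Ioi hy₀.le)).neg.rexp.aestronglyMeasurable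
      measurableSet_Ioi) ?_
  filter_upwards [ae_restrict_mem measurableSet_Ioi] with z hz
  rw [norm_of_nonneg (exp_nonneg _)]
  exact exp_neg_Qfun_drift_le hcγ (hy.trans (le_of_lt hz))

theorem sq_le_two_mul_drift (hr : 0 ≤ r) (hcγ : 0 < c * γ) {t : ℝ}
    (ht : tailThreshold r c γ ≤ t) : t ^ 2 ≤ 2 * drift r c γ t := by
  have ht₁ : 1 ≤ t := (le_max_left _ _).trans ht
  have hct : 4 * (1 + r) ≤ c * γ * t := by
    rw [← div_le_iff₀' hcγ]
    exact (le_max_right _ _).trans ht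
  have h2α : 2 * drift r c γ t = 1 / t - r * t + c * γ * t * t ^ 2 / 4 := by
    unfold drift
    field_simp
    ring
  have : 0 < 1 / t := by positivity
  have : 4 * (1 + r) * t ^ 2 ≤ c * γ * t * t ^ 2 := by gcongr
  have : r * t ≤ r * t ^ 2 := by gcongr; nlinarith
  rw [h2α]
  nlinarith

theorem Qfun_drift_add_sq_mul_le (hr : 0 ≤ r) (hcγ : 0 < c * γ) {y z : ℝ}
    (hy : tailThreshold r c γ ≤ y) (hyz : y ≤ z) :
    Qfun (drift r c γ) y + y ^ 2 * (z - y) ≤ Qfun (drift r c γ) z := by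
  have hy₀ : 0 < y := zero_lt_one.trans_le ((le_max_left _ _).trans hy)
  have hz₀ : 0 < z := hy₀.trans_le hyz
  have hsub : Qfun (drift r c γ) z - Qfun (drift r c γ) y = ∫ t in y..z, 2 * drift r c γ t :=
    intervalIntegral.integral_interval_sub_left (intervalIntegrable_two_mul_drift one_pos hz₀)
      (intervalIntegrable_two_mul_drift one_pos hy₀)
  have hmono : ∫ _ in y..z, y ^ 2 ≤ ∫ t in y..z, 2 * drift r c γ t :=
    intervalIntegral.integral_mono_on hyz intervalIntegrable_const
      (intervalIntegrable_two_mul_drift hy₀ hz₀) fun t ht =>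
        (pow_le_pow_left₀ hy₀.le ht.1 2).trans (sq_le_two_mul_drift hr hcγ (hy.trans ht.1))
  simp only [intervalIntegral.integral_const, smul_eq_mul] at hmono
  linarith

theorem tendsto_scaleFun_drift (hcγ : 0 < c * γ) :
    Tendsto (scaleFun (drift r c γ)) atTop atTop :=
  tendsto_intervalIntegral_atTop_of_const_le (exp_pos (-((2 + r) ^ 2 / (c * γ))))
    (continuousOn_Qfun_drift.mono (Ici_subset_Ioi.mpr one_pos)).rexp fun z hz =>
      exp_le_exp.mpr (by linarith [two_mul_log_sub_le_Qfun_drift (r := r) hcγ hz, log_nonneg hz])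

theorem norm_exp_Qfun_drift_mul_integral_le (hr : 0 ≤ r) (hcγ : 0 ≤ c * γ) {y : ℝ}
    (hy₀ : 0 < y) (hy₁ : y ≤ 1) :
    ‖exp (Qfun (drift r c γ) y) * ∫ z in (1 : ℝ)..y, exp (-Qfun (drift r c γ) z)‖ ≤
      exp (r / 2) * exp (c * γ / 16) := by
  have hinner :
      ‖∫ z in (1 : ℝ)..y, exp (-Qfun (drift r c γ) z)‖ ≤ exp (c * γ / 16) * -log y := by
    rw [intervalIntegral.integral_symm, norm_neg]
    calc _ ≤ ∫ z in y..1, exp (c * γ / 16) * z⁻¹ :=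
          intervalIntegral.norm_integral_le_of_norm_le hy₁ (ae_of_all _ fun z hz => by
            have hz₀ : 0 < z := hy₀.trans hz.1
            calc ‖exp (-Qfun (drift r c γ) z)‖ = exp (-Qfun (drift r c γ) z) :=
                  norm_of_nonneg (exp_nonneg _)
              _ ≤ exp (c * γ / 16 - log z) :=
                  exp_le_exp.mpr (by linarith [log_sub_le_Qfun_drift hr hcγ hz₀ hz.2])
              _ = exp (c * γ / 16) * z⁻¹ := by rw [exp_sub, exp_log hz₀, ← div_eq_mul_inv])
            ((intervalIntegrable_inv_iff.mpr
              (Or.inr (by simp [uIcc_of_le hy₁, hy₀.not_ge]))).const_mul _)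
      _ = exp (c * γ / 16) * -log y := by
          rw [intervalIntegral.integral_const_mul, integral_inv_of_pos hy₀ one_pos, one_div,
            log_inv]
  have hexp : exp (Qfun (drift r c γ) y) ≤ exp (r / 2) * y := by
    calc exp (Qfun (drift r c γ) y) ≤ exp (r / 2 + log y) :=
          exp_le_exp.mpr (by linarith [Qfun_drift_le_log_add hr hcγ hy₀ hy₁])
      _ = exp (r / 2) * y := by rw [exp_add, exp_log hy₀]
  have hylog : y * -log y ≤ 1 := by
    have := abs_log_mul_self_lt y hy₀ hy₁
    rw [abs_lt] at this
    linarith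
  calc _ = exp (Qfun (drift r c γ) y) * ‖∫ z in (1 : ℝ)..y, exp (-Qfun (drift r c γ) z)‖ := by
        rw [norm_mul, norm_of_nonneg (exp_nonneg _)]
    _ ≤ exp (r / 2) * y * (exp (c * γ / 16) * -log y) :=
        mul_le_mul hexp hinner (norm_nonneg _) (by positivity)
    _ = exp (r / 2) * exp (c * γ / 16) * (y * -log y) := by ring
    _ ≤ exp (r / 2) * exp (c * γ / 16) := mul_le_of_le_one_right (by positivity) hylog

theorem bddAbove_kappaFun_drift (hr : 0 ≤ r) (hcγ : 0 ≤ c * γ) :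
    BddAbove (kappaFun (drift r c γ) '' Ioo 0 1) := by
  refine ⟨exp (r / 2) * exp (c * γ / 16), ?_⟩
  rintro _ ⟨x, ⟨hx₀, hx₁⟩, rfl⟩
  have hbound : ‖kappaFun (drift r c γ) x‖ ≤ exp (r / 2) * exp (c * γ / 16) * |x - 1| :=
    intervalIntegral.norm_integral_le_of_norm_le_const fun y hy => by
      rw [uIoc_of_ge hx₁.le] at hy
      exact norm_exp_Qfun_drift_mul_integral_le hr hcγ (hx₀.trans hy.1) hy.2
  rw [abs_of_neg (by linarith)] at hbound
  calc kappaFun (drift r c γ) x ≤ ‖kappaFun (drift r c γ) x‖ := le_norm_self _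
    _ ≤ _ := hbound
    _ ≤ _ := mul_le_of_le_one_right (by positivity) (by linarith)

theorem speedMeasure_drift_Ioo_eq_top (hr : 0 ≤ r) (hcγ : 0 ≤ c * γ) {ε : ℝ} (hε : 0 < ε) :
    speedMeasure (drift r c γ) (Ioo 0 ε) = ⊤ := by
  rw [speedMeasure, withDensity_apply _ measurableSet_Ioo,
    Measure.restrict_restrict measurableSet_Ioo, inter_eq_left.mpr Ioo_subset_Ioi_self]
  refine top_unique
    (le_of_eq_of_le ?_ (lintegral_mono_set (Ioo_subset_Ioo_right (min_le_left ε 1))))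
  refine (lintegral_Ioo_zero_eq_top_of_inv_le (exp_pos (-(r / 2))) (lt_min hε one_pos)
    fun y hy => ?_).symm
  have hy₀ : 0 < y := hy.1
  calc exp (-(r / 2)) * y⁻¹ = exp (-(r / 2) - log y) := by
        rw [exp_sub, exp_log hy₀, ← div_eq_mul_inv]
    _ ≤ exp (-Qfun (drift r c γ) y) := exp_le_exp.mpr
        (by linarith [Qfun_drift_le_log_add hr hcγ hy₀ (hy.2.le.trans (min_le_right ε 1))])

theorem integrableOn_exp_Qfun_drift_mul_tail (hr : 0 ≤ r) (hcγ : 0 < c * γ) :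
    IntegrableOn (fun y => exp (Qfun (drift r c γ) y) *
      ∫ z in Ioi y, exp (-Qfun (drift r c γ) z)) (Ioi 1) := by
  set y₀ := tailThreshold r c γ
  have hy₀ : 1 ≤ y₀ := le_max_left _ _
  have hexp : ContinuousOn (fun y => exp (Qfun (drift r c γ) y)) (Ici 1) :=
    (continuousOn_Qfun_drift.mono (Ici_subset_Ioi.mpr one_pos)).rexp
  have htail := antitoneOn_setIntegral_Ioi (integrableOn_exp_neg_Qfun_drift (r := r) hcγ le_rfl)
    fun z => (exp_pos _).le
  have hmeas : ∀ s ⊆ Ici (1 : ℝ), MeasurableSet s →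
      AEStronglyMeasurable (fun y => ∫ z in Ioi y, exp (-Qfun (drift r c γ) z))
        (volume.restrict s) := fun s hs hsm =>
    (aemeasurable_restrict_of_antitoneOn hsm (htail.mono hs)).aestronglyMeasurable
  rw [← Ioc_union_Ioi_eq_Ioi hy₀]
  refine IntegrableOn.union ?_ ?_
  · refine
      ((hexp.mono Icc_subset_Ici_self).integrableOn_Icc.mono_set Ioc_subset_Icc_self).mul_bdd
      (hmeas _ (Ioc_subset_Icc_self.trans Icc_subset_Ici_self) measurableSet_Ioc)
      (c := ∫ z in Ioi 1, exp (-Qfun (drift r c γ) z)) ?_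
    filter_upwards [ae_restrict_mem measurableSet_Ioc] with y hy
    rw [norm_of_nonneg (setIntegral_nonneg measurableSet_Ioi fun z _ => (exp_pos _).le)]
    exact htail self_mem_Ici (mem_Ici.mpr hy.1.le) hy.1.le
  · refine Integrable.mono' (integrableOn_Ioi_rpow_of_lt (a := -2) (by norm_num) (by positivity))
      ((hexp.mono (Ioi_subset_Ici hy₀)).aestronglyMeasurable measurableSet_Ioi |>.mul
        (hmeas _ (Ioi_subset_Ici hy₀) measurableSet_Ioi)) ?_
    filter_upwards [ae_restrict_mem measurableSet_Ioi] with y hy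
    have hy₁ : 1 ≤ y := hy₀.trans hy.le
    have hG := setIntegral_Ioi_exp_neg_le (by positivity : 0 < y ^ 2)
      (integrableOn_exp_neg_Qfun_drift hcγ hy₁)
      fun z hz => Qfun_drift_add_sq_mul_le hr hcγ hy.le hz.le
    calc _ ≤ exp (Qfun (drift r c γ) y) * (exp (-Qfun (drift r c γ) y) / y ^ 2) := by
          rw [norm_mul, norm_of_nonneg (exp_nonneg _),
            norm_of_nonneg (setIntegral_nonneg measurableSet_Ioi fun z _ => (exp_pos _).le)]
          exact mul_le_mul_of_nonneg_left hG (exp_nonneg _)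
      _ = y ^ (-2 : ℝ) := by
          rw [mul_div_assoc', ← exp_add, add_neg_cancel, exp_zero, rpow_neg (by positivity)]
          norm_cast
          rw [one_div]

end LogisticFeller

/-- For the transformed logistic Feller diffusion, i.e. the diffusion
`dX_t = dB_t − α(X_t)dt` with `α(x) = 1/(2x) − rx/2 + cγx³/8` and `r, c, γ > 0`,
hypothesis (H) holds:
(H1) absorption at 0 is certain (equivalently `Λ(∞) = ∞` and `κ(0⁺) < ∞`);
(H2) `μ(0,ε) = ∞` for every `ε > 0`;
(H3) `∫₁^∞ e^{Q(y)} (∫_y^∞ e^{-Q(z)} dz) dy < ∞`. -/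
theorem logistic_feller_hypH (r c γ : ℝ) (hr : 0 < r) (hc : 0 < c) (hγ : 0 < γ) :
    HypH (fun x => 1 / (2 * x) - r * x / 2 + c * γ * x ^ 3 / 8) := by
  open LogisticFeller in
  have hcγ : 0 < c * γ := mul_pos hc hγ
  show HypH (drift r c γ)
  exact ⟨⟨tendsto_scaleFun_drift hcγ, bddAbove_kappaFun_drift hr.le hcγ.le⟩,
    fun ε hε => speedMeasure_drift_Ioo_eq_top hr.le hcγ.le hε,
    fun y hy => integrableOn_exp_neg_Qfun_drift hcγ hy,
    integrableOn_exp_Qfun_drift_mul_tail hr.le hcγ⟩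
end
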